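/- Let x₀ ∈ ℝ^{n+1} and r > 0, and suppose the sphere S(x₀; r) and the sphere S(x̃₀; r̃) intersect at a point x. Let z = (1/r)Ψ(x₀) + (r/2)w and z̃ = (1/r̃)Ψ(x̃₀) + (r̃/2)w be their associated spacelike vectors. Then ⟨z, z̃⟩ equals the Euclidean inner product of the inward unit normals N(x) = (x₀ − x)/r and Ñ(x) = (x̃₀ − x)/r̃ of the two spheres at x. -/

import Mathlib

/-!
`Ψ` is an isometric embedding of Euclidean space into the light cone:
`B (Ψ x) (Ψ y) = -‖x - y‖² / 2` and `B (Ψ x) w = 1`. Expanding bilinearly gives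
`B z z' = (r² + r'² - ‖x₀ - x₀'‖²) / (2 r r')`, and when both spheres pass through `x` the
polarization identity turns this into `⟪x₀ - x, x₀' - x⟫ / (r r')`.
-/

open scoped RealInnerProductSpace

section

variable {E L : Type*} [NormedAddCommGroup E] [InnerProductSpace ℝ E] [AddCommGroup L] [Module ℝ L]

/-- `v, w` are lightlike with `B v w = 1` and `C` is an isometry onto a subspace of
`(span {v, w})ᗮ`. -/
structure IsLightconeFrame (B : LinearMap.BilinForm ℝ L) (v w : L) (C : E →ₗ[ℝ] L) : Prop where
  symm : ∀ a b, B a b = B b a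
  w_w : B w w = 0
  v_v : B v v = 0
  v_w : B v w = 1
  C_C : ∀ x y, B (C x) (C y) = ⟪x, y⟫
  C_v : ∀ x, B (C x) v = 0
  C_w : ∀ x, B (C x) w = 0

noncomputable def lightconeEmbedding (v w : L) (C : E →ₗ[ℝ] L) (x : E) : L :=
  v + C x - ((1 / 2) * ‖x‖ ^ 2) • w

noncomputable def sphereVector (v w : L) (C : E →ₗ[ℝ] L) (x₀ : E) (r : ℝ) : L :=
  (1 / r) • lightconeEmbedding v w C x₀ + (r / 2) • w

namespace IsLightconeFrame

variable {B : LinearMap.BilinForm ℝ L} {v w : L} {C : E →ₗ[ℝ] L}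

theorem lightconeEmbedding_w (h : IsLightconeFrame B v w C) (x : E) :
    B (lightconeEmbedding v w C x) w = 1 := by
  simp [lightconeEmbedding, h.v_w, h.C_w, h.w_w]

theorem w_lightconeEmbedding (h : IsLightconeFrame B v w C) (x : E) :
    B w (lightconeEmbedding v w C x) = 1 := by
  rw [h.symm, h.lightconeEmbedding_w]

theorem lightconeEmbedding_lightconeEmbedding (h : IsLightconeFrame B v w C) (x y : E) :
    B (lightconeEmbedding v w C x) (lightconeEmbedding v w C y) = -(1 / 2) * ‖x - y‖ ^ 2 := by
  have w_v : B w v = 1 := by rw [h.symm, h.v_w]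
  have v_C : ∀ y, B v (C y) = 0 := fun y ↦ by rw [h.symm, h.C_v]
  have w_C : ∀ y, B w (C y) = 0 := fun y ↦ by rw [h.symm, h.C_w]
  simp only [lightconeEmbedding, map_add, map_sub, map_smul, LinearMap.add_apply,
    LinearMap.sub_apply, LinearMap.smul_apply, smul_eq_mul, h.v_v, h.w_w, h.v_w, w_v, h.C_C,
    h.C_v, h.C_w, v_C, w_C, norm_sub_sq_real]
  ring

theorem sphereVector_sphereVector (h : IsLightconeFrame B v w C) (x₀ x₀' : E) {r r' : ℝ}
    (hr : r ≠ 0) (hr' : r' ≠ 0) :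
    B (sphereVector v w C x₀ r) (sphereVector v w C x₀' r') =
      (r ^ 2 + r' ^ 2 - ‖x₀ - x₀'‖ ^ 2) / (2 * r * r') := by
  simp only [sphereVector, map_add, map_smul, LinearMap.add_apply, LinearMap.smul_apply,
    smul_eq_mul, h.lightconeEmbedding_lightconeEmbedding, h.lightconeEmbedding_w,
    h.w_lightconeEmbedding, h.w_w]
  field_simp
  ring

end IsLightconeFrame

theorem real_inner_sub_sub_of_norm_sub_eq (x₀ x₀' x : E) {r r' : ℝ}
    (hx : ‖x - x₀‖ = r) (hx' : ‖x - x₀'‖ = r') :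
    ⟪x₀ - x, x₀' - x⟫ = (r ^ 2 + r' ^ 2 - ‖x₀ - x₀'‖ ^ 2) / 2 := by
  rw [real_inner_eq_norm_mul_self_add_norm_mul_self_sub_norm_sub_mul_self_div_two,
    sub_sub_sub_cancel_right, norm_sub_rev x₀, norm_sub_rev x₀', hx, hx']
  ring

end

theorem stmt3 {n : ℕ} {L : Type*} [AddCommGroup L] [Module ℝ L]
    (B : LinearMap.BilinForm ℝ L) (hsymm : ∀ a b : L, B a b = B b a)
    (v w : L) (hww : B w w = 0) (hvv : B v v = 0) (hvw : B v w = 1)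
    (C : EuclideanSpace ℝ (Fin (n + 1)) →ₗ[ℝ] L)
    (hC : ∀ x y, B (C x) (C y) = ⟪x, y⟫)
    (hCv : ∀ x, B (C x) v = 0) (hCw : ∀ x, B (C x) w = 0)
    (Ψ : EuclideanSpace ℝ (Fin (n + 1)) → L)
    (hΨ : ∀ x, Ψ x = v + C x - ((1 / 2) * ‖x‖ ^ 2) • w)
    (x₀ x₀' x : EuclideanSpace ℝ (Fin (n + 1))) (r r' : ℝ)
    (hr : 0 < r) (hr' : 0 < r')
    (hx : ‖x - x₀‖ = r) (hx' : ‖x - x₀'‖ = r')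
    (z z' : L)
    (hz : z = (1 / r) • Ψ x₀ + (r / 2) • w)
    (hz' : z' = (1 / r') • Ψ x₀' + (r' / 2) • w) :
    B z z' = ⟪(1 / r) • (x₀ - x), (1 / r') • (x₀' - x)⟫ := by
  have frame : IsLightconeFrame B v w C := ⟨hsymm, hww, hvv, hvw, hC, hCv, hCw⟩
  obtain rfl : Ψ = lightconeEmbedding v w C := funext hΨ
  have hzz' : B z z' = B (sphereVector v w C x₀ r) (sphereVector v w C x₀' r') := by
    rw [hz, hz', sphereVector, sphereVector]
  rw [hzz', frame.sphereVector_sphereVector x₀ x₀' hr.ne' hr'.ne', real_inner_smul_left,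
    real_inner_smul_right, real_inner_sub_sub_of_norm_sub_eq x₀ x₀' x hx hx']
  field_simp
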